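/- For every R ≥ 0, the Nash effort matrix e*(z_NA(R)) equals the Pareto effort matrix with parameter 1/2, a*(z_Pe(1/2), 1/2), if and only if R = 0. -/

import Mathlib

/-- The Pareto-optimal sensitivities `z_Pe(λ)`. -/
noncomputable def zPe (k11 k12 k21 k22 lam : ℝ) : Fin 2 → Fin 2 → ℝ :=
  ![![(1 - lam) ^ 2 * k12 / (lam ^ 2 * k11 + (1 - lam) ^ 2 * k12),
      lam ^ 2 * k11 / (lam ^ 2 * k11 + (1 - lam) ^ 2 * k12)],
    ![(1 - lam) ^ 2 * k22 / (lam ^ 2 * k21 + (1 - lam) ^ 2 * k22),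
      lam ^ 2 * k21 / (lam ^ 2 * k21 + (1 - lam) ^ 2 * k22)]]

/-- The optimal sensitivities `z_NA(R)` in the no-Planner (Nash) model. -/
noncomputable def zNA (k11 k12 k21 k22 R : ℝ) : Fin 2 → Fin 2 → ℝ :=
  ![![(1 + R * k12) / (1 + R * (k11 + k12)), (1 + R * k11) / (1 + R * (k11 + k12))],
    ![(1 + R * k22) / (1 + R * (k21 + k22)), (1 + R * k21) / (1 + R * (k21 + k22))]]

/-- The Pareto effort matrix `a*(z, λ)`. -/
noncomputable def aStar (k11 k12 k21 k22 lam : ℝ) (z : Fin 2 → Fin 2 → ℝ) : Fin 2 → Fin 2 → ℝ :=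
  ![![(lam * z 0 0 + (1 - lam) * z 0 1) / (lam * k11),
      -((lam * z 0 0 + (1 - lam) * z 0 1) / ((1 - lam) * k12))],
    ![-((lam * z 1 0 + (1 - lam) * z 1 1) / (lam * k21)),
      (lam * z 1 0 + (1 - lam) * z 1 1) / ((1 - lam) * k22)]]

/-- The Nash effort matrix `e*(z)`. -/
noncomputable def eStar (k11 k12 k21 k22 : ℝ) (z : Fin 2 → Fin 2 → ℝ) : Fin 2 → Fin 2 → ℝ :=
  ![![z 0 0 / k11, -(z 0 1 / k12)], ![-(z 1 0 / k21), z 1 1 / k22]]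

/-! At `λ = 1/2` the weights in `a*` cancel, so `a*(z, 1/2)` is the Nash effort of the matrix of
row sums of `z`; the rows of `z_Pe(λ)` sum to `1`, so `a*(z_Pe(1/2), 1/2) = e*(1)`.
Since `e*` is injective for nonzero costs, the claim reduces to `z_NA(R) = 1 ↔ R = 0`, and
already the entry `(1 + R k12) / (1 + R (k11 + k12)) = 1` forces `R k11 = 0`. -/

section

variable {k11 k12 k21 k22 : ℝ}

theorem aStar_half_eq_eStar_rowSum (z : Fin 2 → Fin 2 → ℝ) :
    aStar k11 k12 k21 k22 (1 / 2) z = eStar k11 k12 k21 k22 (fun i _ => z i 0 + z i 1) := by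
  funext i j
  fin_cases i <;> fin_cases j <;>
    simp only [aStar, eStar, one_div, Fin.isValue, Fin.zero_eta, Fin.mk_one, Matrix.cons_val',
      Matrix.cons_val_zero, Matrix.cons_val_one, Matrix.cons_val_fin_one, neg_inj] <;> ring

theorem zPe_rowSum {lam : ℝ} (h1 : lam ^ 2 * k11 + (1 - lam) ^ 2 * k12 ≠ 0)
    (h2 : lam ^ 2 * k21 + (1 - lam) ^ 2 * k22 ≠ 0) (i : Fin 2) :
    zPe k11 k12 k21 k22 lam i 0 + zPe k11 k12 k21 k22 lam i 1 = 1 := by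
  fin_cases i <;>
    simp only [zPe, Fin.isValue, Fin.zero_eta, Fin.mk_one, Matrix.cons_val',
      Matrix.cons_val_zero, Matrix.cons_val_one, Matrix.cons_val_fin_one] <;> field_simp <;> ring

theorem eStar_injective (hk11 : k11 ≠ 0) (hk12 : k12 ≠ 0) (hk21 : k21 ≠ 0) (hk22 : k22 ≠ 0) :
    Function.Injective (eStar k11 k12 k21 k22) := by
  intro z w h
  funext i j
  have hij := congrFun (congrFun h i) j
  fin_cases i <;> fin_cases j <;> simpa [eStar, hk11, hk12, hk21, hk22] using hij

theorem zNA_eq_one_iff (hk11 : k11 ≠ 0) {R : ℝ} :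
    zNA k11 k12 k21 k22 R = (fun _ _ => 1) ↔ R = 0 := by
  constructor
  · intro h
    have h00 : (1 + R * k12) / (1 + R * (k11 + k12)) = 1 := congrFun (congrFun h 0) 0
    have hden : 1 + R * (k11 + k12) ≠ 0 := by
      rintro hzero
      simp [hzero] at h00
    rw [div_eq_one_iff_eq hden] at h00
    have hRk : R * k11 = 0 := by linarith
    exact (mul_eq_zero.mp hRk).resolve_right hk11
  · rintro rfl
    funext i j
    fin_cases i <;> fin_cases j <;> simp [zNA]

end

theorem nash_is_pareto_half_iff_risk_neutral_general (k11 k12 k21 k22 : ℝ)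
    (hk11 : 0 < k11) (hk12 : 0 < k12) (hk21 : 0 < k21) (hk22 : 0 < k22)
    (R : ℝ) :
    eStar k11 k12 k21 k22 (zNA k11 k12 k21 k22 R)
        = aStar k11 k12 k21 k22 (1 / 2) (zPe k11 k12 k21 k22 (1 / 2)) ↔ R = 0 := by
  have hrows : (fun i (_ : Fin 2) =>
      zPe k11 k12 k21 k22 (1 / 2) i 0 + zPe k11 k12 k21 k22 (1 / 2) i 1) = fun _ _ => 1 := by
    funext i _
    exact zPe_rowSum (by positivity) (by positivity) i
  rw [aStar_half_eq_eStar_rowSum, hrows,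
    (eStar_injective hk11.ne' hk12.ne' hk21.ne' hk22.ne').eq_iff]
  exact zNA_eq_one_iff hk11.ne'

/-- for every `R ≥ 0`, the Nash effort `e*(z_NA(R))` equals the Pareto effort
with parameter `1/2`, `a*(z_Pe(1/2), 1/2)`, iff `R = 0`. -/
theorem nash_is_pareto_half_iff_risk_neutral (k11 k12 k21 k22 : ℝ)
    (hk11 : 0 < k11) (hk12 : 0 < k12) (hk21 : 0 < k21) (hk22 : 0 < k22)
    (R : ℝ) (hR : 0 ≤ R) :
    eStar k11 k12 k21 k22 (zNA k11 k12 k21 k22 R)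
        = aStar k11 k12 k21 k22 (1 / 2) (zPe k11 k12 k21 k22 (1 / 2)) ↔ R = 0 :=
  nash_is_pareto_half_iff_risk_neutral_general k11 k12 k21 k22 hk11 hk12 hk21 hk22 R
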